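/- In any Shapley cost sharing game, the function Φ(P) = Σ_{r ∈ R} Σ_{∅ ≠ T ⊆ P^r} α^r_T · C^r(T), where α^r_T = (|P^r| − |T|)! · (|T| − 1)! / |P^r|!, is an exact potential function: for every strategy vector P, every player i, and every alternative strategy Q_i ∈ 𝒫_i, Φ(P) − Φ(P_{−i}, Q_i) = C_i(P) − C_i(P_{−i}, Q_i). -/

import Mathlib

open Finset

def preSet {N : Type*} [DecidableEq N] (S : Finset N)
    (π : {x // x ∈ S} ≃ Fin S.card) (i : {x // x ∈ S}) : Finset N :=
  (S.attach.filter (fun j => π j < π i)).image Subtype.val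

noncomputable def shapley {N : Type*} [DecidableEq N]
    (C : Finset N → ℝ) (S : Finset N) (i : N) : ℝ :=
  if hi : i ∈ S then
    (1 / (Nat.factorial S.card : ℝ)) *
      ∑ π : {x // x ∈ S} ≃ Fin S.card,
        (C (preSet S π ⟨i, hi⟩ ∪ {i}) - C (preSet S π ⟨i, hi⟩))
  else 0

/-- `users P r = P^r = {i : r ∈ P_i}`, the set of players using resource `r`. -/
def users {n : ℕ} {R : Type*} [DecidableEq R]
    (P : Fin n → Finset R) (r : R) : Finset (Fin n) :=
  Finset.univ.filter (fun i => r ∈ P i)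

/-- The private cost of player `i` under Shapley cost sharing:
`C_i(P) = Σ_{r ∈ P_i} φ_i(C^r, P^r)`. -/
noncomputable def privCost {n : ℕ} {R : Type*} [DecidableEq R]
    (Cr : R → Finset (Fin n) → ℝ) (P : Fin n → Finset R) (i : Fin n) : ℝ :=
  ∑ r ∈ P i, shapley (Cr r) (users P r) i

/-- The social cost `C(P) = Σ_{r ∈ R} C^r(P^r)`. -/
noncomputable def socCost {n : ℕ} {R : Type*} [Fintype R] [DecidableEq R]
    (Cr : R → Finset (Fin n) → ℝ) (P : Fin n → Finset R) : ℝ :=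
  ∑ r : R, Cr r (users P r)

/-- The Shapley potential
`Φ(P) = Σ_{r ∈ R} Σ_{∅ ≠ T ⊆ P^r} ((|P^r|-|T|)!(|T|-1)!/|P^r|!) · C^r(T)`. -/
noncomputable def pot {n : ℕ} {R : Type*} [Fintype R] [DecidableEq R]
    (Cr : R → Finset (Fin n) → ℝ) (P : Fin n → Finset R) : ℝ :=
  ∑ r : R, ∑ T ∈ (users P r).powerset.filter (fun T => T.Nonempty),
    ((Nat.factorial ((users P r).card - T.card) : ℝ) *
        (Nat.factorial (T.card - 1) : ℝ) / (Nat.factorial (users P r).card : ℝ)) *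
      Cr r T

/-- `P` is a pure Nash equilibrium of the Shapley cost sharing game. -/
def isPNE {n : ℕ} {R : Type*} [DecidableEq R]
    (Strat : Fin n → Set (Finset R)) (Cr : R → Finset (Fin n) → ℝ)
    (P : Fin n → Finset R) : Prop :=
  (∀ i, P i ∈ Strat i) ∧
    ∀ i, ∀ Q ∈ Strat i, privCost Cr P i ≤ privCost Cr (Function.update P i Q) i

/-- `H_k`, the `k`-th harmonicNum number. -/
noncomputable def harmonicNum (k : ℕ) : ℝ := ∑ l ∈ Finset.Icc 1 k, (1 / (l : ℝ))

/-!
For `C ∅ = 0`, the potential of one resource, `Φ(S) = ∑_{∅ ≠ T ⊆ S} w(|S|, |T|) C(T)` with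
`w(s, t) = (s - t)! (t - 1)! / s!`, satisfies `Φ(S) = Φ(S \ {i}) + φ_i(C, S)` for every player `i`
(Hart and Mas-Colell). Grouping the orderings of `S` by the set `T` of predecessors of `i`, each `T`
occurs for `|T|! (|S| - 1 - |T|)!` orderings, so `φ_i(C, S)` is the sum of
`w(|S|, |T| + 1) (C(T ∪ {i}) - C(T))` over `T ⊆ S \ {i}`; splitting `Φ(S)` according to
whether `i ∈ T`, the identity reduces to `w(s + 1, t) + w(s + 1, t + 1) = w(s, t)`.
Summed over resources, `Φ(P) = ∑_r Φ_r(P^r \ {i}) + C_i(P)`, and `P^r \ {i}` does not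
depend on the strategy of `i`.
-/

namespace Equiv

def fiberwiseEquivPi {α β ι : Type*} (f : α → ι) (g : β → ι) :
    {e : α ≃ β // ∀ a, g (e a) = f a} ≃ ∀ c, {a // f a = c} ≃ {b // g b = c} where
  toFun e c := e.1.subtypeEquiv fun a => by rw [e.2 a]
  invFun E := ⟨ofFiberEquiv E, ofFiberEquiv_map E⟩
  left_inv e := by ext a; rfl
  right_inv E := by
    funext c
    ext ⟨a, rfl⟩
    rfl

end Equiv

theorem Fintype.card_fiberwise_equiv {α β ι : Type*} [Fintype α] [Fintype β] [Fintype ι]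
    [DecidableEq α] [DecidableEq β] [DecidableEq ι] (f : α → ι) (g : β → ι)
    (h : ∀ c, card {a // f a = c} = card {b // g b = c}) :
    card {e : α ≃ β // ∀ a, g (e a) = f a} = ∏ c, (card {a // f a = c}).factorial := by
  rw [card_congr (Equiv.fiberwiseEquivPi f g), card_pi]
  exact Finset.prod_congr rfl fun c _ => card_equiv (equivOfCardEq (h c))

lemma Fin.card_subtype_compare_eq_lt {n : ℕ} (x : Fin n) :
    Fintype.card {k : Fin n // compare k x = .lt} = x := by
  rw [Fintype.card_congr (Equiv.subtypeEquivRight fun _ => compare_lt_iff_lt),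
    Fintype.card_subtype, filter_gt_eq_Iio, Fin.card_Iio]

lemma Fin.card_subtype_compare_eq_eq {n : ℕ} (x : Fin n) :
    Fintype.card {k : Fin n // compare k x = .eq} = 1 := by
  rw [Fintype.card_congr (Equiv.subtypeEquivRight fun _ => compare_eq_iff_eq),
    Fintype.card_subtype_eq]

lemma Fin.card_subtype_compare_eq_gt {n : ℕ} (x : Fin n) :
    Fintype.card {k : Fin n // compare k x = .gt} = n - 1 - x := by
  rw [Fintype.card_congr (Equiv.subtypeEquivRight fun _ => compare_gt_iff_gt),
    Fintype.card_subtype, filter_lt_eq_Ioi, Fin.card_Ioi]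

noncomputable def shapleyWeight (s t : ℕ) : ℝ := (s - t).factorial * (t - 1).factorial / s.factorial

lemma shapleyWeight_add_shapleyWeight_succ {s t : ℕ} (ht : 1 ≤ t) (hts : t ≤ s) :
    shapleyWeight (s + 1) t + shapleyWeight (s + 1) (t + 1) = shapleyWeight s t := by
  obtain ⟨k, rfl⟩ : ∃ k, t = k + 1 := ⟨t - 1, by omega⟩
  obtain ⟨a, rfl⟩ : ∃ a, s = k + 1 + a := ⟨s - (k + 1), by omega⟩
  simp only [shapleyWeight, show k + 1 + a + 1 - (k + 1) = a + 1 by omega,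
    show k + 1 + a + 1 - (k + 1 + 1) = a by omega, show k + 1 + a - (k + 1) = a by omega,
    Nat.add_sub_cancel, Nat.factorial_succ]
  push_cast
  field_simp
  ring

section Shapley

variable {N : Type*}

noncomputable def shapleyPotential (C : Finset N → ℝ) (S : Finset N) : ℝ :=
  ∑ T ∈ S.powerset.filter (fun T => T.Nonempty), shapleyWeight S.card T.card * C T

lemma shapleyPotential_eq_sum_powerset {C : Finset N → ℝ} (hC0 : C ∅ = 0) (S : Finset N) :
    shapleyPotential C S = ∑ T ∈ S.powerset, shapleyWeight S.card T.card * C T :=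
  sum_filter_of_ne fun T _ h => nonempty_iff_ne_empty.mpr (by rintro rfl; simp [hC0] at h)

variable [DecidableEq N]

lemma mem_preSet {S : Finset N} {π : {x // x ∈ S} ≃ Fin S.card} {j : {x // x ∈ S}} {x : N} :
    x ∈ preSet S π j ↔ ∃ hx : x ∈ S, π ⟨x, hx⟩ < π j := by
  simp [preSet]

lemma card_preSet (S : Finset N) (π : {x // x ∈ S} ≃ Fin S.card) (j : {x // x ∈ S}) :
    (preSet S π j).card = π j := by
  rw [preSet, card_image_of_injective _ Subtype.val_injective, ← univ_eq_attach, ← Fin.card_Iio]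
  exact card_equiv π (by simp)

lemma preSet_subset_erase {S : Finset N} (π : {x // x ∈ S} ≃ Fin S.card) {i : N} (hi : i ∈ S) :
    preSet S π ⟨i, hi⟩ ⊆ S.erase i := by
  intro x hx
  obtain ⟨hxS, hlt⟩ := mem_preSet.mp hx
  refine mem_erase.mpr ⟨?_, hxS⟩
  rintro rfl
  exact lt_irrefl _ hlt

-- `compare (π x) (π i)` for any ordering `π` in which the predecessors of `i` are exactly `T`.
def predCompare (T : Finset N) (i x : N) : Ordering :=
  if x ∈ T then .lt else if x = i then .eq else .gt

lemma predCompare_eq_lt {T : Finset N} {i x : N} : predCompare T i x = .lt ↔ x ∈ T := by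
  unfold predCompare; split_ifs <;> simp_all

lemma predCompare_eq_eq {T : Finset N} {i x : N} (hiT : i ∉ T) :
    predCompare T i x = .eq ↔ x = i := by
  unfold predCompare; split_ifs <;> grind

lemma predCompare_eq_gt {T : Finset N} {i x : N} : predCompare T i x = .gt ↔ x ∉ insert i T := by
  unfold predCompare; split_ifs <;> simp_all

lemma preSet_eq_iff_forall_compare {S T : Finset N} {i : N} (hi : i ∈ S) (hT : T ⊆ S.erase i)
    (π : {x // x ∈ S} ≃ Fin S.card) {x : Fin S.card} (hx : (x : ℕ) = T.card) :
    preSet S π ⟨i, hi⟩ = T ↔ ∀ j, compare (π j) x = predCompare T i j := by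
  constructor
  · rintro rfl j
    obtain rfl : x = π ⟨i, hi⟩ := Fin.ext (by rw [hx, card_preSet])
    unfold predCompare
    split_ifs with hjT hji
    · obtain ⟨_, hlt⟩ := mem_preSet.mp hjT
      exact compare_lt_iff_lt.mpr hlt
    · exact compare_eq_iff_eq.mpr (congrArg π (Subtype.ext hji))
    · refine compare_gt_iff_gt.mpr (lt_of_le_of_ne (not_lt.mp fun hlt => hjT ?_) ?_)
      · exact mem_preSet.mpr ⟨j.2, hlt⟩
      · exact fun h => hji (congrArg Subtype.val (π.injective h)).symm
  · intro h
    have hiT : i ∉ T := fun hiT => (mem_erase.mp (hT hiT)).1 rfl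
    have hπi : π ⟨i, hi⟩ = x := compare_eq_iff_eq.mp (by simp [h, predCompare, hiT])
    ext y
    rw [mem_preSet, hπi]
    constructor
    · rintro ⟨hy, hlt⟩
      exact predCompare_eq_lt.mp ((h ⟨y, hy⟩).symm.trans (compare_lt_iff_lt.mpr hlt))
    · intro hyT
      exact ⟨mem_of_mem_erase (hT hyT),
        compare_lt_iff_lt.mp ((h _).trans (predCompare_eq_lt.mpr hyT))⟩

lemma card_subtype_mem_of_subset {S U : Finset N} (hU : U ⊆ S) :
    Fintype.card {j : {x // x ∈ S} // (j : N) ∈ U} = U.card :=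
  (Fintype.card_congr (Equiv.subtypeSubtypeEquivSubtype (hU ·))).trans (Fintype.card_coe U)

lemma card_subtype_predCompare_eq {S T : Finset N} {i : N} (hi : i ∈ S) (hT : T ⊆ S.erase i)
    (c : Ordering) {x : Fin S.card} (hx : (x : ℕ) = T.card) :
    Fintype.card {j : {x // x ∈ S} // predCompare T i j = c} =
      Fintype.card {k : Fin S.card // compare k x = c} := by
  obtain ⟨hTS, hiT⟩ := subset_erase.mp hT
  cases c
  · rw [Fintype.card_congr (Equiv.subtypeEquivRight fun _ => predCompare_eq_lt),
      card_subtype_mem_of_subset hTS, Fin.card_subtype_compare_eq_lt, hx]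
  · rw [Fintype.card_congr (Equiv.subtypeEquivRight fun j => (predCompare_eq_eq hiT).trans
        (Subtype.ext_iff (a1 := j) (a2 := ⟨i, hi⟩)).symm),
      Fintype.card_subtype_eq, Fin.card_subtype_compare_eq_eq]
  · rw [Fintype.card_congr (Equiv.subtypeEquivRight fun j => predCompare_eq_gt.trans
        (and_iff_right j.2).symm |>.trans mem_sdiff.symm),
      card_subtype_mem_of_subset sdiff_subset, Fin.card_subtype_compare_eq_gt,
      card_sdiff_of_subset (insert_subset hi hTS), card_insert_of_notMem hiT, hx]
    omega

lemma card_preSet_eq {S T : Finset N} {i : N} (hi : i ∈ S) (hT : T ⊆ S.erase i) :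
    Fintype.card {π : {x // x ∈ S} ≃ Fin S.card // preSet S π ⟨i, hi⟩ = T} =
      T.card.factorial * (S.card - 1 - T.card).factorial := by
  set x : Fin S.card := ⟨T.card, card_lt_card (hT.trans_ssubset (erase_ssubset hi))⟩
  have hfib c := card_subtype_predCompare_eq hi hT c (x := x) rfl
  rw [Fintype.card_congr
      (Equiv.subtypeEquivRight fun π => preSet_eq_iff_forall_compare hi hT π (x := x) rfl),
    Fintype.card_fiberwise_equiv _ _ hfib,
    show (univ : Finset Ordering) = {.lt, .eq, .gt} from rfl]
  simp [hfib, Fin.card_subtype_compare_eq_lt, Fin.card_subtype_compare_eq_gt, x]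

lemma shapley_of_notMem (C : Finset N → ℝ) {S : Finset N} {i : N} (hi : i ∉ S) :
    shapley C S i = 0 :=
  dif_neg hi

lemma shapley_eq_sum_powerset (C : Finset N → ℝ) {S : Finset N} {i : N} (hi : i ∈ S) :
    shapley C S i = ∑ T ∈ (S.erase i).powerset,
      shapleyWeight S.card (T.card + 1) * (C (insert i T) - C T) := by
  rw [shapley, dif_pos hi, ← sum_fiberwise_of_maps_to (g := fun π => preSet S π ⟨i, hi⟩)
    fun π _ => mem_powerset.mpr (preSet_subset_erase π hi), mul_sum]
  refine sum_congr rfl fun T hT => ?_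
  rw [sum_congr rfl fun π hπ => by rw [(mem_filter.mp hπ).2], sum_const,
    ← Fintype.card_subtype, card_preSet_eq hi (mem_powerset.mp hT), nsmul_eq_mul,
    union_comm, ← insert_eq, shapleyWeight, Nat.add_sub_cancel, Nat.sub_sub, add_comm 1]
  push_cast
  ring

lemma shapleyPotential_insert {C : Finset N → ℝ} (hC0 : C ∅ = 0) {S : Finset N} {i : N}
    (hi : i ∉ S) :
    shapleyPotential C (insert i S) = shapleyPotential C S + shapley C (insert i S) i := by
  rw [shapleyPotential_eq_sum_powerset hC0, shapleyPotential_eq_sum_powerset hC0,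
    sum_powerset_insert hi, shapley_eq_sum_powerset C (mem_insert_self i S), erase_insert hi,
    card_insert_of_notMem hi, ← sum_add_distrib, ← sum_add_distrib]
  refine sum_congr rfl fun T hT => ?_
  have hTS := mem_powerset.mp hT
  rw [card_insert_of_notMem fun h => hi (hTS h)]
  rcases T.eq_empty_or_nonempty with rfl | hne
  · simp [hC0]
  · rw [← shapleyWeight_add_shapleyWeight_succ hne.card_pos (card_le_card hTS)]
    ring

lemma shapleyPotential_eq_erase_add {C : Finset N → ℝ} (hC0 : C ∅ = 0) (S : Finset N) (i : N) :
    shapleyPotential C S = shapleyPotential C (S.erase i) + shapley C S i := by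
  by_cases hi : i ∈ S
  · simpa only [insert_erase hi] using shapleyPotential_insert hC0 (notMem_erase i S)
  · rw [erase_eq_of_notMem hi, shapley_of_notMem C hi, add_zero]

end Shapley

section Game

variable {n : ℕ} {R : Type*} [DecidableEq R]

lemma mem_users {P : Fin n → Finset R} {r : R} {i : Fin n} : i ∈ users P r ↔ r ∈ P i := by
  simp [users]

lemma erase_users_update (P : Fin n → Finset R) (i : Fin n) (Q : Finset R) (r : R) :
    (users (Function.update P i Q) r).erase i = (users P r).erase i := by
  ext j
  by_cases hj : j = i <;> simp [users, hj]

lemma privCost_eq_sum_univ [Fintype R] (Cr : R → Finset (Fin n) → ℝ) (P : Fin n → Finset R)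
    (i : Fin n) : privCost Cr P i = ∑ r, shapley (Cr r) (users P r) i :=
  sum_subset (subset_univ _) fun _ _ hr => shapley_of_notMem _ (mem_users.not.mpr hr)

lemma pot_eq_sum_shapleyPotential [Fintype R] (Cr : R → Finset (Fin n) → ℝ)
    (P : Fin n → Finset R) : pot Cr P = ∑ r, shapleyPotential (Cr r) (users P r) :=
  rfl

lemma pot_eq_sum_erase_add_privCost [Fintype R] {Cr : R → Finset (Fin n) → ℝ}
    (hC0 : ∀ r, Cr r ∅ = 0) (P : Fin n → Finset R) (i : Fin n) :
    pot Cr P = ∑ r, shapleyPotential (Cr r) ((users P r).erase i) + privCost Cr P i := by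
  rw [pot_eq_sum_shapleyPotential, privCost_eq_sum_univ, ← sum_add_distrib]
  exact sum_congr rfl fun r _ => shapleyPotential_eq_erase_add (hC0 r) _ _

end Game

theorem shapley_exact_potential_general {n : ℕ} {R : Type*} [Fintype R] [DecidableEq R]
    (Cr : R → Finset (Fin n) → ℝ)
    (hC0 : ∀ r, Cr r ∅ = 0)
    (P : Fin n → Finset R)
    (i : Fin n) (Q : Finset R) :
    pot Cr P - pot Cr (Function.update P i Q) =
      privCost Cr P i - privCost Cr (Function.update P i Q) i := by
  rw [pot_eq_sum_erase_add_privCost hC0 P i,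
    pot_eq_sum_erase_add_privCost hC0 (Function.update P i Q) i]
  simp only [erase_users_update]
  ring

/-- The Shapley potential is an exact potential function. -/
theorem shapley_exact_potential {n : ℕ} {R : Type*} [Fintype R] [DecidableEq R]
    (Strat : Fin n → Set (Finset R)) (Cr : R → Finset (Fin n) → ℝ)
    (hC0 : ∀ r, Cr r ∅ = 0)
    (P : Fin n → Finset R) (hP : ∀ i, P i ∈ Strat i)
    (i : Fin n) (Q : Finset R) (hQ : Q ∈ Strat i) :
    pot Cr P - pot Cr (Function.update P i Q) =
      privCost Cr P i - privCost Cr (Function.update P i Q) i :=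
  shapley_exact_potential_general Cr hC0 P i Q
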